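/- arXiv:1003.3501 — 4 statements merged into one kernel-verified Lean document; each statement's English description precedes it below -/
import Mathlib

section
/- (Theorem 1, precise form.) Let M ≥ 2 and k₂ ≥ 1 be natural numbers and R > 0 a real rate. Let γ : {0, …, M−1} → ℝ satisfy γ_j ≥ 1 for all j and γ_{M−1} = 1. Define P_e(s) = 1 − e^{−(2^R − 1)/s} for s > 0 and P_o(s) = Σ_{j=0}^{M−1} C(M−1, j) · P_e(s)^j · (1 − P_e(s))^{M−1−j} · γ_j · P_e(s)^{(M−j)k₂ + 1}. Then lim_{s→∞} (−log P_o(s))/(log s) = M + k₂; i.e., the diversity order of the GDNC scheme is M + k₂. -/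
open Real Filter Topology

/-!
Write `p = P_e(s)` and `N = M + k₂`. Since `k₂ ≥ 1`, the `j`-th summand of `P_o` carries the power
`p ^ (j + (M - j) k₂ + 1)` with exponent at least `N`, with equality at `j = M - 1`, where the summand
is exactly `p ^ N` because `γ (M - 1) = 1`. Hence `p ^ N ≤ P_o ≤ C p ^ N` with `C = Σ C(M-1,j) γ j`.
Moreover `c / (2 s) ≤ P_e(s) ≤ c / s` for `s ≥ c = 2^R - 1`, so `P_o(s)` is squeezed between constant
multiples of `s ^ (-N)`, and constant factors vanish from `log P_o(s) / log s` as `s → ∞`.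
-/

lemma half_le_one_sub_exp_neg {x : ℝ} (hx₀ : 0 ≤ x) (hx₁ : x ≤ 1) : x / 2 ≤ 1 - exp (-x) := by
  have h : exp (-x) * (1 + x) ≤ 1 := by
    calc exp (-x) * (1 + x) ≤ exp (-x) * exp x := by gcongr; linarith [add_one_le_exp x]
      _ = 1 := by rw [← exp_add, neg_add_cancel, exp_zero]
  nlinarith [exp_pos (-x), mul_nonneg hx₀ (sub_nonneg.2 hx₁)]

lemma tendsto_log_div_log_of_le_of_le {f g : ℝ → ℝ} {a b L : ℝ} (ha : 0 < a)
    (hg : ∀ᶠ s in atTop, 0 < g s) (hlo : ∀ᶠ s in atTop, a * g s ≤ f s)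
    (hhi : ∀ᶠ s in atTop, f s ≤ b * g s)
    (hlim : Tendsto (fun s => log (g s) / log s) atTop (𝓝 L)) :
    Tendsto (fun s => log (f s) / log s) atTop (𝓝 L) := by
  have hshift : ∀ c : ℝ, Tendsto (fun s => (log c + log (g s)) / log s) atTop (𝓝 L) := by
    intro c
    have h := (tendsto_log_atTop.inv_tendsto_atTop.const_mul (log c)).add hlim
    simp only [mul_zero, zero_add] at h
    exact h.congr fun s => by simp only [Pi.inv_apply]; ring
  refine tendsto_of_tendsto_of_tendsto_of_le_of_le' (hshift a) (hshift b) ?_ ?_ <;>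
    filter_upwards [hg, hlo, hhi, eventually_gt_atTop 1] with s hgs hlos hhis hs <;>
    refine div_le_div_of_nonneg_right ?_ (log_pos hs).le
  · rw [← log_mul ha.ne' hgs.ne']
    exact log_le_log (mul_pos ha hgs) hlos
  · have hfs : 0 < f s := (mul_pos ha hgs).trans_le hlos
    rw [← log_mul (pos_of_mul_pos_left (hfs.trans_le hhis) hgs.le).ne' hgs.ne']
    exact log_le_log hfs hhis

lemma tendsto_log_one_sub_exp_neg_div_div_log {c : ℝ} (hc : 0 < c) :
    Tendsto (fun s => log (1 - exp (-c / s)) / log s) atTop (𝓝 (-1)) := by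
  refine tendsto_log_div_log_of_le_of_le (half_pos hc) (g := fun s => s⁻¹) (b := c)
    (eventually_gt_atTop 0 |>.mono fun s hs => inv_pos.2 hs) ?_ ?_ ?_
  · filter_upwards [eventually_ge_atTop c] with s hs
    have hs₀ : 0 < s := hc.trans_le hs
    have := half_le_one_sub_exp_neg (div_pos hc hs₀).le ((div_le_one hs₀).2 hs)
    rw [neg_div]
    linarith [show c / 2 * s⁻¹ = c / s / 2 by ring]
  · filter_upwards with s
    rw [neg_div, ← div_eq_mul_inv]
    linarith [one_sub_le_exp_neg (c / s)]
  · refine tendsto_const_nhds.congr' ?_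
    filter_upwards [eventually_gt_atTop 1] with s hs
    rw [log_inv, neg_div, div_self (log_pos hs).ne']

def gdncOutage (M k₂ : ℕ) (γ : ℕ → ℝ) (p : ℝ) : ℝ :=
  ∑ j ∈ Finset.range M,
    ((M - 1).choose j : ℝ) * p ^ j * (1 - p) ^ (M - 1 - j) * γ j * p ^ ((M - j) * k₂ + 1)

lemma add_le_add_mul_add_one {M j k : ℕ} (hj : j < M) (hk : 1 ≤ k) :
    M + k ≤ j + ((M - j) * k + 1) := by
  obtain ⟨d, rfl⟩ : ∃ d, M = j + d + 1 := ⟨M - j - 1, by omega⟩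
  rw [show j + d + 1 - j = d + 1 by omega]
  nlinarith

section

variable {M k₂ : ℕ} {γ : ℕ → ℝ} {p : ℝ}

lemma mul_pow_le_gdncOutage (hM : 0 < M) (hp₀ : 0 ≤ p) (hp₁ : p ≤ 1)
    (hγ : ∀ j < M, 0 ≤ γ j) : γ (M - 1) * p ^ (M + k₂) ≤ gdncOutage M k₂ γ p := by
  have hterm : γ (M - 1) * p ^ (M + k₂) = ((M - 1).choose (M - 1) : ℝ) * p ^ (M - 1) *
      (1 - p) ^ (M - 1 - (M - 1)) * γ (M - 1) * p ^ ((M - (M - 1)) * k₂ + 1) := by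
    obtain ⟨n, rfl⟩ : ∃ n, M = n + 1 := ⟨M - 1, by omega⟩
    simp only [Nat.add_sub_cancel, Nat.choose_self, Nat.sub_self, Nat.add_sub_cancel_left]
    push_cast
    ring
  rw [hterm]
  refine Finset.single_le_sum (f := fun j => ((M - 1).choose j : ℝ) * p ^ j *
    (1 - p) ^ (M - 1 - j) * γ j * p ^ ((M - j) * k₂ + 1)) (fun j hj => ?_)
    (Finset.mem_range.2 (Nat.sub_lt hM one_pos))
  have hγj := hγ j (Finset.mem_range.1 hj)
  have hq : 0 ≤ 1 - p := sub_nonneg.2 hp₁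
  positivity

lemma gdncOutage_le (hk₂ : 1 ≤ k₂) (hp₀ : 0 ≤ p) (hp₁ : p ≤ 1) (hγ : ∀ j < M, 0 ≤ γ j) :
    gdncOutage M k₂ γ p ≤ (∑ j ∈ Finset.range M, ((M - 1).choose j : ℝ) * γ j) * p ^ (M + k₂) := by
  rw [gdncOutage, Finset.sum_mul]
  refine Finset.sum_le_sum fun j hj => ?_
  have hjM := Finset.mem_range.1 hj
  have hcoef : 0 ≤ ((M - 1).choose j : ℝ) * γ j := mul_nonneg (Nat.cast_nonneg _) (hγ j hjM)
  calc ((M - 1).choose j : ℝ) * p ^ j * (1 - p) ^ (M - 1 - j) * γ j * p ^ ((M - j) * k₂ + 1)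
      = ((M - 1).choose j : ℝ) * γ j * ((1 - p) ^ (M - 1 - j) * p ^ (j + ((M - j) * k₂ + 1))) := by
        ring
    _ ≤ ((M - 1).choose j : ℝ) * γ j * (1 * p ^ (M + k₂)) := by
        refine mul_le_mul_of_nonneg_left (mul_le_mul ?_ ?_ (by positivity) zero_le_one) hcoef
        · exact pow_le_one₀ (sub_nonneg.2 hp₁) (sub_le_self _ hp₀)
        · exact pow_le_pow_of_le_one hp₀ hp₁ (add_le_add_mul_add_one hjM hk₂)
    _ = ((M - 1).choose j : ℝ) * γ j * p ^ (M + k₂) := by rw [one_mul]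

end

/-- **Theorem 1 (GDNC diversity order).** Let `M ≥ 2` users each transmit `k₂ ≥ 1` parity
packets, with single-channel Rayleigh outage probability `P_e(s) = 1 − e^{−(2^R−1)/s}`.
If, conditional on `j` of the `M−1` inter-user channels failing, the base station fails
with probability `γ j · P_e^{(M−j)k₂+1}` (with multiplicities `γ j ≥ 1` and `γ (M−1) = 1`),
then the overall outage probability
`P_o(s) = Σ_{j<M} C(M−1,j) P_e^j (1−P_e)^{M−1−j} γ j P_e^{(M−j)k₂+1}`
has diversity order `M + k₂`. -/
theorem gdnc_diversity_order (M k₂ : ℕ) (hM : 2 ≤ M) (hk₂ : 1 ≤ k₂)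
    (R : ℝ) (hR : 0 < R) (γ : ℕ → ℝ)
    (hγ : ∀ j < M, 1 ≤ γ j) (hγtop : γ (M - 1) = 1) :
    Tendsto
      (fun s : ℝ =>
        -Real.log
            (∑ j ∈ Finset.range M,
              ((M - 1).choose j : ℝ) *
                (1 - Real.exp (-((2 : ℝ) ^ R - 1) / s)) ^ j *
                (1 - (1 - Real.exp (-((2 : ℝ) ^ R - 1) / s))) ^ (M - 1 - j) *
                γ j *
                (1 - Real.exp (-((2 : ℝ) ^ R - 1) / s)) ^ ((M - j) * k₂ + 1)) /
          Real.log s)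
      atTop (𝓝 (M + k₂ : ℝ)) := by
  set c : ℝ := (2 : ℝ) ^ R - 1
  have hc : 0 < c := sub_pos.2 (one_lt_rpow one_lt_two hR)
  set P : ℝ → ℝ := fun s => 1 - exp (-c / s)
  have hP : ∀ᶠ s in atTop, 0 < P s ∧ P s ≤ 1 := by
    filter_upwards [eventually_gt_atTop 0] with s hs
    exact ⟨sub_pos.2 (exp_lt_one_iff.2 (div_neg_of_neg_of_pos (neg_neg_of_pos hc) hs)),
      sub_le_self _ (exp_pos _).le⟩
  have hγ₀ : ∀ j < M, 0 ≤ γ j := fun j hj => zero_le_one.trans (hγ j hj)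
  have hPN : Tendsto (fun s => log (P s ^ (M + k₂)) / log s) atTop (𝓝 (-(M + k₂ : ℕ) : ℝ)) := by
    simpa [log_pow, mul_div_assoc] using
      (tendsto_log_one_sub_exp_neg_div_div_log hc).const_mul ((M + k₂ : ℕ) : ℝ)
  have hPo := tendsto_log_div_log_of_le_of_le one_pos
    (hP.mono fun s hs => pow_pos hs.1 _)
    (hP.mono fun s hs => by
      simpa [hγtop] using mul_pow_le_gdncOutage (k₂ := k₂) (by omega) hs.1.le hs.2 hγ₀)
    (hP.mono fun s hs => gdncOutage_le hk₂ hs.1.le hs.2 hγ₀) hPN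
  show Tendsto (fun s => -log (gdncOutage M k₂ γ (P s)) / log s) atTop (𝓝 (M + k₂ : ℝ))
  simpa only [neg_div, neg_neg, Nat.cast_add] using hPo.neg
end

section
/- Let M ≥ 2 and k₂ ≥ 2 be natural numbers, and let γ : {0, …, M−1} → ℝ satisfy γ_j ≥ 1 for all j and γ_{M−1} = 1. Define Q(p) = Σ_{j=0}^{M−1} C(M−1, j) · p^j · (1−p)^{M−1−j} · γ_j · p^{(M−j)k₂ + 1} for p ∈ (0,1). Then lim_{p→0⁺} Q(p)/p^{M+k₂} = 1. -/
/-!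
Each summand of `Q(p)` carries the power `p ^ (j + (M - j) k₂ + 1)`, whose exponent is
`M + k₂ + (M - 1 - j)(k₂ - 1)`. Dividing by `p ^ (M + k₂)` therefore leaves a polynomial in `p`
in which, since `k₂ ≥ 2`, every term except `j = M - 1` vanishes at `p = 0`; its value at `0`
is `γ (M - 1) = 1`, and continuity gives the limit.
-/

open Filter Topology

lemma outage_exponent_eq {M k j : ℕ} (hj : j < M) (hk : 1 ≤ k) :
    j + ((M - j) * k + 1) = (M + k) + (M - 1 - j) * (k - 1) := by
  obtain ⟨a, rfl⟩ : ∃ a, M = j + a + 1 := ⟨M - j - 1, by omega⟩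
  obtain ⟨b, rfl⟩ : ∃ b, k = b + 1 := ⟨k - 1, by omega⟩
  rw [show j + a + 1 - j = a + 1 by omega, show j + a + 1 - 1 - j = a by omega,
    Nat.add_sub_cancel]
  ring

noncomputable def normalizedOutage (M k : ℕ) (γ : ℕ → ℝ) (p : ℝ) : ℝ :=
  ∑ j ∈ Finset.range M,
    ((M - 1).choose j : ℝ) * p ^ ((M - 1 - j) * (k - 1)) * (1 - p) ^ (M - 1 - j) * γ j

lemma outage_sum_eq_pow_mul_normalizedOutage (M k : ℕ) (γ : ℕ → ℝ) (p : ℝ) (hk : 1 ≤ k) :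
    ∑ j ∈ Finset.range M,
        ((M - 1).choose j : ℝ) * p ^ j * (1 - p) ^ (M - 1 - j) * γ j * p ^ ((M - j) * k + 1) =
      p ^ (M + k) * normalizedOutage M k γ p := by
  rw [normalizedOutage, Finset.mul_sum]
  refine Finset.sum_congr rfl fun j hj => ?_
  have hpow : p ^ j * p ^ ((M - j) * k + 1) = p ^ (M + k) * p ^ ((M - 1 - j) * (k - 1)) := by
    rw [← pow_add, ← pow_add, outage_exponent_eq (Finset.mem_range.1 hj) hk]
  linear_combination ((M - 1).choose j * (1 - p) ^ (M - 1 - j) * γ j : ℝ) * hpow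

lemma normalizedOutage_zero {M k : ℕ} (γ : ℕ → ℝ) (hM : 1 ≤ M) (hk : 2 ≤ k) :
    normalizedOutage M k γ 0 = γ (M - 1) := by
  rw [normalizedOutage, Finset.sum_eq_single_of_mem (M - 1) (Finset.mem_range.2 (by omega))]
  · simp
  · intro j hj hne
    have hexp : (M - 1 - j) * (k - 1) ≠ 0 :=
      Nat.mul_ne_zero (by have := Finset.mem_range.1 hj; omega) (by omega)
    simp [zero_pow hexp]

lemma continuous_normalizedOutage (M k : ℕ) (γ : ℕ → ℝ) :
    Continuous (normalizedOutage M k γ) := by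
  unfold normalizedOutage
  fun_prop

theorem gdnc_outage_asymptotics_general (M k₂ : ℕ) (hM : 2 ≤ M) (hk₂ : 2 ≤ k₂)
    (γ : ℕ → ℝ) (hγtop : γ (M - 1) = 1) :
    Tendsto
      (fun p : ℝ =>
        (∑ j ∈ Finset.range M,
            ((M - 1).choose j : ℝ) * p ^ j * (1 - p) ^ (M - 1 - j) * γ j *
              p ^ ((M - j) * k₂ + 1)) /
          p ^ (M + k₂))
      (nhdsWithin 0 (Set.Ioo (0 : ℝ) 1)) (𝓝 1) := by
  have hlim : Tendsto (normalizedOutage M k₂ γ) (nhdsWithin 0 (Set.Ioo (0 : ℝ) 1)) (𝓝 1) := by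
    rw [← hγtop, ← normalizedOutage_zero γ (by omega) hk₂]
    exact (continuous_normalizedOutage M k₂ γ).continuousWithinAt
  refine hlim.congr' ?_
  filter_upwards [self_mem_nhdsWithin] with p ⟨hp0, _⟩
  rw [outage_sum_eq_pow_mul_normalizedOutage M k₂ γ p (by omega),
    mul_div_cancel_left₀ _ (pow_ne_zero _ hp0.ne')]

/-- In the GDNC scheme with `M ≥ 2` users and `k₂ ≥ 2` parity transmissions per user,
the overall outage probability
`Q(p) = Σ_{j<M} C(M−1,j) p^j (1−p)^{M−1−j} γ j p^{(M−j)k₂+1}`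
(with multiplicities `γ j ≥ 1` and `γ (M−1) = 1`) satisfies
`lim_{p→0⁺} Q(p)/p^{M+k₂} = 1`. -/
theorem gdnc_outage_asymptotics (M k₂ : ℕ) (hM : 2 ≤ M) (hk₂ : 2 ≤ k₂)
    (γ : ℕ → ℝ) (hγ : ∀ j < M, 1 ≤ γ j) (hγtop : γ (M - 1) = 1) :
    Tendsto
      (fun p : ℝ =>
        (∑ j ∈ Finset.range M,
            ((M - 1).choose j : ℝ) * p ^ j * (1 - p) ^ (M - 1 - j) * γ j *
              p ^ ((M - j) * k₂ + 1)) /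
          p ^ (M + k₂))
      (nhdsWithin 0 (Set.Ioo (0 : ℝ) 1)) (𝓝 1) :=
  gdnc_outage_asymptotics_general M k₂ hM hk₂ γ hγtop
end

section
/- Let F = GF(4) (the field with four elements) and let a ∈ F with a ≠ 0 and a ≠ 1. Then for all x, y ∈ F not both zero, the vector (x, y, x + y, x + a·y) ∈ F⁴ has Hamming weight at least 3. Consequently, the two-user DNC code with generator matrix [[1,0,1,1],[0,1,1,a]] has minimum distance 3, so the base station can recover both information packets (I₁, I₂) from any 2 of the 4 received packets. -/
open scoped Classical

/-!
A nonzero codeword of weight at most 2 vanishes at two coordinates. But any two columns of the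
generator matrix `[[1,0,1,1],[0,1,1,a]]` are linearly independent as soon as `a ∉ {0, 1}`
(the only nontrivial pairs give `a * y = 0` and `(a - 1) * y = 0`), so vanishing at two
coordinates forces the message `(x, y)` to be zero.
-/

theorem card_le_hammingNorm_add_one {ι β : Type*} [Fintype ι] [Zero β] [DecidableEq β]
    {f : ι → β} (h : ∀ i j, f i = 0 → f j = 0 → i = j) :
    Fintype.card ι ≤ hammingNorm f + 1 := by
  have hzeros : (Finset.univ.filter fun i => f i = 0).card ≤ 1 :=
    Finset.card_le_one.mpr fun i hi j hj =>
      h i j (Finset.mem_filter.mp hi).2 (Finset.mem_filter.mp hj).2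
  have hsplit := Finset.univ.card_filter_add_card_filter_not fun i => f i = 0
  rw [Finset.card_univ] at hsplit
  simp only [hammingNorm, ne_eq] at hsplit ⊢
  omega

theorem eq_zero_of_dnc_codeword_zero_at_two {R : Type*} [Ring R] [NoZeroDivisors R] {a : R}
    (ha0 : a ≠ 0) (ha1 : a ≠ 1) {x y : R} {i j : Fin 4} (hij : i ≠ j)
    (hi : ![x, y, x + y, x + a * y] i = 0) (hj : ![x, y, x + y, x + a * y] j = 0) :
    x = 0 ∧ y = 0 := by
  have hay : a * y = 0 → y = 0 := fun h => (mul_eq_zero.mp h).resolve_left ha0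
  have hsum : x + y = 0 → x + a * y = 0 → y = 0 := fun h₁ h₂ => by
    have : (a - 1) * y = 0 := by
      rw [sub_mul, one_mul, ← add_sub_add_left_eq_sub, h₁, h₂, sub_zero]
    exact (mul_eq_zero.mp this).resolve_left (sub_ne_zero.mpr ha1)
  fin_cases i <;> fin_cases j <;> simp_all

/-- In the two-user DNC scheme over GF(4) with generator matrix
`[[1,0,1,1],[0,1,1,a]]` (`a ≠ 0`, `a ≠ 1`), every nonzero codeword
`(x, y, x+y, x+a·y)` has Hamming weight at least 3, so the base station can
recover both information packets from any 2 of the 4 received packets. -/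
theorem dnc_two_user_min_distance_three
    (a : GaloisField 2 2) (ha0 : a ≠ 0) (ha1 : a ≠ 1) :
    ∀ x y : GaloisField 2 2, ¬(x = 0 ∧ y = 0) →
      3 ≤ hammingNorm ![x, y, x + y, x + a * y] := by
  intro x y hxy
  have hcard := card_le_hammingNorm_add_one fun i j hi hj =>
    by_contra fun hij => hxy (eq_zero_of_dnc_codeword_zero_at_two ha0 ha1 hij hi hj)
  rw [Fintype.card_fin] at hcard
  omega
end

section
/- Every linear subspace C of GF(4)^8 (functions Fin 8 → GF(4)) of dimension 4 contains a nonzero codeword of Hamming weight at most 4; i.e., no [8,4,5] code over the field with four elements exists, so the Singleton bound d = 5 for a rate-4/8 code can only be achieved with field size at least 8. -/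
/-!
Call a code of length `n` and dimension `k` over `F` MDS if its minimum distance is at least
`n - k + 1`. Then a codeword vanishing on `k` coordinates is zero, so restriction to any `k`
coordinates is an isomorphism. For `k ≥ 2` fix `k - 1` coordinates `R = S ∪ {a}` and a further
coordinate `b`; interpolation gives codewords `c_x` (`x ∈ F`) with `c_x = 0` on `S`, `c_x a = 1`
and `c_x b = x`. Two of them agreeing at a coordinate `j ∉ R` coincide, so for each such `j`
exactly one `c_x` vanishes at `j`; and `c_x ≠ 0` vanishes at most once outside `R`. Hence
`j ↦ x` injects the `n - k + 1` coordinates outside `R` into `F`, so `n + 1 ≤ q + k`.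
For `n = 8`, `k = 4`, `q = 4` this fails.
-/

open scoped Classical

open Finset Module

theorem hammingNorm_add_card_le_of_forall_eq_zero {ι F : Type*} [Fintype ι] [Zero F]
    [DecidableEq F] {c : ι → F} {s : Finset ι} (h : ∀ i ∈ s, c i = 0) :
    hammingNorm c + #s ≤ Fintype.card ι := by
  have hsupp : ({i | c i ≠ 0} : Finset ι) ⊆ sᶜ := fun i hi =>
    mem_compl.2 fun his => (mem_filter.1 hi).2 (h i his)
  have := card_le_card hsupp
  rw [card_compl] at this
  exact (Nat.le_sub_iff_add_le (card_le_univ s)).1 this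

section MDS

variable {F ι : Type*} [Field F] [DecidableEq F] [Fintype ι]

-- Minimum distance at least `n - k + 1`, written without truncated subtraction.
def Submodule.IsMDS (C : Submodule F (ι → F)) : Prop :=
  ∀ c ∈ C, c ≠ 0 → Fintype.card ι + 1 ≤ hammingNorm c + finrank F C

namespace Submodule.IsMDS

variable {C : Submodule F (ι → F)}

theorem eq_zero_of_forall_eq_zero (hC : C.IsMDS) {c : ι → F} (hc : c ∈ C) {s : Finset ι}
    (hs : finrank F C ≤ #s) (h : ∀ i ∈ s, c i = 0) : c = 0 := by
  by_contra hc0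
  have := hC c hc hc0
  have := hammingNorm_add_card_le_of_forall_eq_zero h
  omega

theorem exists_mem_forall_eq (hC : C.IsMDS) {T : Finset ι} (hT : #T = finrank F C) (g : ι → F) :
    ∃ c ∈ C, ∀ i ∈ T, c i = g i := by
  let restrict : C →ₗ[F] (T → F) :=
    (LinearMap.funLeft F F ((↑) : T → ι)).comp C.subtype
  have hinj : Function.Injective restrict := by
    rw [← LinearMap.ker_eq_bot, LinearMap.ker_eq_bot']
    intro c hc
    exact Subtype.ext <| hC.eq_zero_of_forall_eq_zero c.2 hT.ge fun i hi =>
      congrFun hc ⟨i, hi⟩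
  have hsurj : Function.Surjective restrict :=
    (LinearMap.injective_iff_surjective_of_finrank_eq_finrank
      (by rw [finrank_fintype_fun_eq_card, Fintype.card_coe, hT])).1 hinj
  obtain ⟨c, hc⟩ := hsurj fun i => g i
  exact ⟨c, c.2, fun i hi => congrFun hc ⟨i, hi⟩⟩

theorem exists_mem_apply_eq (hC : C.IsMDS) {a b : ι} (hab : a ≠ b) {S : Finset ι}
    (haS : a ∉ S) (hbS : b ∉ S) (hS : #S + 2 = finrank F C) (x : F) :
    ∃ c ∈ C, c a = 1 ∧ c b = x ∧ ∀ i ∈ S, c i = 0 := by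
  obtain ⟨c, hc, hcT⟩ := hC.exists_mem_forall_eq (T := insert a (insert b S))
    (by rw [card_insert_of_notMem (by simp [hab, haS]), card_insert_of_notMem hbS]; omega)
    (fun i => if i = a then 1 else if i = b then x else 0)
  refine ⟨c, hc, by simpa using hcT a, by simpa [hab.symm] using hcT b, fun i hi => ?_⟩
  simpa [ne_of_mem_of_not_mem hi haS, ne_of_mem_of_not_mem hi hbS, hi] using hcT i

theorem exists_apply_eq_zero [Finite F] (hC : C.IsMDS) {c : F → ι → F} (hc : ∀ x, c x ∈ C)
    {b : ι} (hcb : ∀ x, c x b = x) {R : Finset ι} (hR : #R + 1 = finrank F C)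
    (hcR : ∀ x y, ∀ i ∈ R, c x i = c y i) {j : ι} (hj : j ∉ R) : ∃ x, c x j = 0 := by
  refine Finite.injective_iff_surjective.1 (fun x y hxy => ?_) 0
  have hxy := hC.eq_zero_of_forall_eq_zero (sub_mem (hc x) (hc y)) (s := insert j R)
    (by rw [card_insert_of_notMem hj]; omega) (by
      intro i hi
      rcases mem_insert.1 hi with rfl | hi
      · exact sub_eq_zero.2 hxy
      · exact sub_eq_zero.2 (hcR x y i hi))
  simpa [hcb, sub_eq_zero] using congrFun hxy b

theorem card_add_one_le [Finite F] (hC : C.IsMDS) (hk : 2 ≤ finrank F C) :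
    Fintype.card ι + 1 ≤ Nat.card F + finrank F C := by
  have := Fintype.ofFinite F
  have hkn : finrank F C ≤ Fintype.card ι :=
    (Submodule.finrank_le C).trans_eq (finrank_fintype_fun_eq_card F)
  obtain ⟨a, b, hab⟩ := Fintype.exists_pair_of_one_lt_card (by omega : 1 < Fintype.card ι)
  obtain ⟨S, hS, hScard⟩ := exists_subset_card_eq (s := ({a, b}ᶜ : Finset ι))
    (n := finrank F C - 2) (by rw [card_compl, card_pair hab]; omega)
  have haS : a ∉ S := fun h => by simpa using hS h
  have hbS : b ∉ S := fun h => by simpa using hS h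
  choose c hcC hca hcb hcS using hC.exists_mem_apply_eq hab haS hbS (by omega)
  have hzero (j : ι) (hj : j ∉ insert a S) : ∃ x, c x j = 0 :=
    hC.exists_apply_eq_zero hcC hcb (by rw [card_insert_of_notMem haS]; omega)
      (fun x y i hi => by
        rcases mem_insert.1 hi with rfl | hi
        · rw [hca, hca]
        · rw [hcS _ _ hi, hcS _ _ hi]) hj
  choose! z hz using hzero
  have hzinj : Set.InjOn z ↑(insert a S)ᶜ := by
    intro j hj j' hj' hjj'
    simp only [coe_compl, Set.mem_compl_iff, mem_coe, mem_insert, not_or] at hj hj'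
    by_contra hne
    have hcz := hC.eq_zero_of_forall_eq_zero (hcC (z j)) (s := insert j (insert j' S))
      (by rw [card_insert_of_notMem (by simp [hne, hj.2]), card_insert_of_notMem hj'.2]; omega)
      (by
        intro i hi
        rcases mem_insert.1 hi with rfl | hi
        · exact hz i (by simp [hj.1, hj.2])
        rcases mem_insert.1 hi with rfl | hi
        · rw [hjj']; exact hz i (by simp [hj'.1, hj'.2])
        · exact hcS _ _ hi)
    simpa [hca] using congrFun hcz a
  have := card_le_card_of_injOn z (t := univ) (fun _ _ => mem_coe.2 (mem_univ _)) hzinj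
  rw [card_compl, card_insert_of_notMem haS, card_univ] at this
  rw [Nat.card_eq_fintype_card]
  omega

end Submodule.IsMDS

end MDS

/-- No `[8,4,5]` code over GF(4) exists: every 4-dimensional linear subspace of
`GF(4)^8` contains a nonzero codeword of Hamming weight at most 4, so the Singleton
bound `d = 5` for a rate-4/8 code can only be achieved with field size at least 8. -/
theorem no_8_4_5_code_over_gf4
    (C : Submodule (GaloisField 2 2) (Fin 8 → GaloisField 2 2))
    (hdim : Module.finrank (GaloisField 2 2) C = 4) :
    ∃ c ∈ C, c ≠ 0 ∧ hammingNorm c ≤ 4 := by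
  by_contra! hweight
  have hC : C.IsMDS := fun c hc hc0 => by
    rw [Fintype.card_fin, hdim]
    linarith [hweight c hc hc0]
  have := hC.card_add_one_le (by rw [hdim]; norm_num)
  rw [Fintype.card_fin, hdim, GaloisField.card 2 2 (by norm_num)] at this
  norm_num at this
end
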